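/- For any integer n > 1 and any vector of probabilities π = (π_2, …, π_{n−1}) with π_i ∈ [0,1], consider the nearest-neighbour Markov chain on {1,…,n} with reflecting barriers and transition probabilities π. Then E[T_{1,n}] + E[T_{n,1}] ≥ 2(n−1)², where E[T_{i,j}] denotes the expected hitting time of state j starting from state i (this expectation may be +∞). -/

import Mathlib

/-!
A bounded function `φ` with `φ j = 0` and `φ ≤ 1 + Pφ` away from `j` bounds `x ↦ E_x[T_j]` from
below: iterating the inequality `t` times along the chain killed on entering `j` gives
`φ s ≤ ∑_{u<t} P(T_j > u) + K · P(T_j > t)`, and `∑_u P(T_j > u) ≤ E[T_j]`.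

If some `π_i` is `0` (resp. `1`), the chain started at `1` (resp. `n`) never leaves `{1, …, i}`
(resp. `{i, …, n}`), so any constant off the target is such a `φ` and the expectation is infinite.
Otherwise the edge conductances `c_x = ∏_{1<i≤x} π_i / (1 - π_i)` satisfy detailed balance, and the
classical crossing times `E_x[T_{x+1}] = 1 + 2 ∑_{k<x} c_k / c_x` and
`E_{x+1}[T_x] = 1 + 2 ∑_{k>x} c_k / c_x` solve the first-step equations. They add up to `2C / c_x`
with `C = ∑_x c_x`, so by Cauchy–Schwarz `E_1[T_n] + E_n[T_1] ≥ 2C ∑_x 1 / c_x ≥ 2 (n - 1)²`.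
-/

open MeasureTheory ENNReal Finset

noncomputable section

/-- `μ` is the law of the time-homogeneous Markov chain on the state space `S` with
one-step transition probabilities `p` and initial state `s`, described through the
probabilities of all cylinder events. -/
def IsMarkovChain {S : Type*} [MeasurableSpace S] [DecidableEq S] (p : S → S → ℝ≥0∞) (s : S)
    (μ : MeasureTheory.Measure (ℕ → S)) : Prop :=
  MeasureTheory.IsProbabilityMeasure μ ∧
    ∀ (T : ℕ) (path : ℕ → S),
      μ {ω | ∀ t ≤ T, ω t = path t} =
        (if path 0 = s then 1 else 0) * ∏ t ∈ Finset.range T, p (path t) (path (t + 1))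

/-- The first *positive* hitting time `min {t > 0 : ω t = j}` of the state `j`
along the trajectory `ω`, viewed in `ℝ≥0∞` (it is `∞` if `j` is never hit). -/
def hitTime {S : Type*} (j : S) (ω : ℕ → S) : ℝ≥0∞ :=
  sInf ((fun t : ℕ => (t : ℝ≥0∞)) '' {t | 0 < t ∧ ω t = j})

/-- The expected hitting time `E[T_{·,j}]` of state `j` under the trajectory law `μ`
(possibly `+∞`). -/
def expHit {S : Type*} [MeasurableSpace S] (μ : MeasureTheory.Measure (ℕ → S)) (j : S) :
    ℝ≥0∞ :=
  ∫⁻ ω, hitTime j ω ∂μ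

/-- Transition probabilities of the nearest-neighbour Markov chain on `{a, …, b} ⊆ ℤ`
with reflecting barriers at `a` and `b`: from `a` go to `a+1`, from `b` go to `b-1`,
and from an interior state `i` go to `i+1` with probability `π i` and to `i-1` with
probability `1 - π i`. -/
def nnTrans (a b : ℤ) (π : ℤ → ℝ≥0∞) : ℤ → ℤ → ℝ≥0∞ := fun i j =>
  if i = a then (if j = a + 1 then 1 else 0)
  else if i = b then (if j = b - 1 then 1 else 0)
  else if a < i ∧ i < b then
    (if j = i + 1 then π i else if j = i - 1 then 1 - π i else 0)
  else 0
section Kernel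

variable {S : Type*} {k : S → S → ℝ≥0∞}

def kernelPow (k : S → S → ℝ≥0∞) : ℕ → (S → ℝ≥0∞) → S → ℝ≥0∞
  | 0, h => h
  | t + 1, h => fun x => ∑' y, k x y * kernelPow k t h y

@[simp] lemma kernelPow_zero (h : S → ℝ≥0∞) : kernelPow k 0 h = h := rfl

lemma kernelPow_succ (t : ℕ) (h : S → ℝ≥0∞) (x : S) :
    kernelPow k (t + 1) h x = ∑' y, k x y * kernelPow k t h y := rfl

lemma kernelPow_le_mul_kernelPow_one {h : S → ℝ≥0∞} {K : ℝ≥0∞} (hK : ∀ x, h x ≤ K) (t : ℕ)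
    (x : S) : kernelPow k t h x ≤ K * kernelPow k t 1 x := by
  induction t generalizing x with
  | zero => simpa using hK x
  | succ t ih =>
    simp only [kernelPow_succ, ← ENNReal.tsum_mul_left]
    exact ENNReal.tsum_le_tsum fun y =>
      (mul_le_mul_right (ih y) _).trans_eq (mul_left_comm _ _ _)

lemma le_kernelPow_add_sum {φ : S → ℝ≥0∞} (hφ : ∀ x, φ x ≤ 1 + ∑' y, k x y * φ y) (t : ℕ)
    (x : S) : φ x ≤ kernelPow k t φ x + ∑ u ∈ range t, kernelPow k u 1 x := by
  induction t generalizing x with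
  | zero => simp
  | succ t ih =>
    calc φ x ≤ 1 + ∑' y, k x y * φ y := hφ x
      _ ≤ 1 + ∑' y, k x y * (kernelPow k t φ y + ∑ u ∈ range t, kernelPow k u 1 y) := by
        gcongr with y; exact ih y
      _ = kernelPow k (t + 1) φ x + ∑ u ∈ range (t + 1), kernelPow k u 1 x := by
        simp only [mul_add, mul_sum, ENNReal.tsum_add, sum_range_succ', kernelPow_succ,
          kernelPow_zero, Pi.one_apply, Summable.tsum_finsetSum fun _ _ => ENNReal.summable]
        ring

theorem le_tsum_kernelPow_one {φ : S → ℝ≥0∞} {K : ℝ≥0∞} (hK : K ≠ ∞) (hφK : ∀ x, φ x ≤ K)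
    (hφ : ∀ x, φ x ≤ 1 + ∑' y, k x y * φ y) (x : S) :
    φ x ≤ ∑' t, kernelPow k t 1 x := by
  by_cases hfin : ∑' t, kernelPow k t 1 x = ∞
  · simp [hfin]
  have hlim : Filter.Tendsto (fun t => K * kernelPow k t 1 x + ∑' t, kernelPow k t 1 x)
      Filter.atTop (nhds (K * 0 + ∑' t, kernelPow k t 1 x)) :=
    (ENNReal.Tendsto.const_mul (ENNReal.tendsto_atTop_zero_of_tsum_ne_top hfin)
      (Or.inr hK)).add_const _
  rw [mul_zero, zero_add] at hlim
  refine ge_of_tendsto' hlim fun t => ?_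
  exact (le_kernelPow_add_sum hφ t x).trans
    (add_le_add (kernelPow_le_mul_kernelPow_one hφK t x) (ENNReal.sum_le_tsum _))

def pathWeight [DecidableEq S] (k : S → S → ℝ≥0∞) (s : S) {t : ℕ} (g : Fin (t + 1) → S) :
    ℝ≥0∞ :=
  (if g 0 = s then 1 else 0) * ∏ u : Fin t, k (g u.castSucc) (g u.succ)

lemma tsum_pathWeight_eq_kernelPow_one [DecidableEq S] (t : ℕ) (s : S) :
    ∑' g : Fin (t + 1) → S, pathWeight k s g = kernelPow k t 1 s := by
  induction t generalizing s with
  | zero =>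
    unfold pathWeight
    rw [← (Equiv.funUnique (Fin 1) S).symm.tsum_eq, tsum_eq_single s (fun x hx => by simp [hx])]
    simp
  | succ t ih =>
    unfold pathWeight at ih ⊢
    rw [← (Fin.consEquiv fun _ => S).tsum_eq, ENNReal.tsum_prod', tsum_eq_single s
      (fun x hx => by simp [hx]), kernelPow_succ]
    simp_rw [← ih, ← ENNReal.tsum_mul_left]
    rw [ENNReal.tsum_comm]
    refine tsum_congr fun g => ?_
    rw [tsum_eq_single (g 0) (fun y hy => by simp [Ne.symm hy])]
    simp [Fin.prod_univ_succ]

end Kernel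

section Chain

variable {S : Type*}

lemma tsum_indicator_le_hitTime (j : S) (ω : ℕ → S) :
    ∑' t, {ω : ℕ → S | ∀ u < t, ω (u + 1) ≠ j}.indicator 1 ω ≤ hitTime j ω := by
  classical
  refine ENNReal.tsum_le_of_sum_range_le fun N => le_sInf ?_
  rintro _ ⟨m, ⟨hm, hωm⟩, rfl⟩
  have hsub : {t ∈ range N | ∀ u < t, ω (u + 1) ≠ j} ⊆ range m := fun t ht => by
    simp only [mem_filter, mem_range] at ht ⊢
    by_contra! hmt
    exact ht.2 (m - 1) (by omega) (by rwa [Nat.sub_add_cancel hm])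
  simpa [Set.indicator_apply, sum_boole] using card_le_card hsub

variable [DecidableEq S]

def tabooKernel (p : S → S → ℝ≥0∞) (j : S) : S → S → ℝ≥0∞ :=
  fun x y => if y = j then 0 else p x y

variable [MeasurableSpace S] {p : S → S → ℝ≥0∞} {s : S} {μ : Measure (ℕ → S)}

lemma IsMarkovChain.measure_cylinder (hμ : IsMarkovChain p s μ) (t : ℕ) (g : Fin (t + 1) → S) :
    μ {ω | ∀ u : Fin (t + 1), ω u = g u} = pathWeight p s g := by
  have hcyl : {ω : ℕ → S | ∀ u : Fin (t + 1), ω u = g u} =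
      {ω | ∀ u ≤ t, ω u = g (Fin.ofNat (t + 1) u)} := by
    ext ω
    refine ⟨fun h u hu => ?_, fun h u => ?_⟩
    · simpa [Nat.mod_eq_of_lt (Nat.lt_succ_of_le hu)] using h (Fin.ofNat (t + 1) u)
    · simpa using h u (Nat.le_of_lt_succ u.isLt)
  rw [hcyl, hμ.2, pathWeight, ← Fin.prod_univ_eq_prod_range]
  congr 2 with u
  congr 2 <;> ext <;> simp

variable [Countable S] [MeasurableSingletonClass S]

lemma IsMarkovChain.measure_forall_ne (hμ : IsMarkovChain p s μ) (j : S) (t : ℕ) :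
    μ {ω | ∀ u < t, ω (u + 1) ≠ j} = kernelPow (tabooKernel p j) t 1 s := by
  set E : Set (Fin (t + 1) → S) := {g | ∀ u : Fin t, g u.succ ≠ j}
  set r : (ℕ → S) → Fin (t + 1) → S := fun ω u => ω u
  have hr : Measurable r := measurable_pi_lambda _ fun u => measurable_pi_apply _
  have hE : {ω : ℕ → S | ∀ u < t, ω (u + 1) ≠ j} = r ⁻¹' E := by
    ext ω
    simp [E, r, Fin.forall_iff]
  rw [hE, ← tsum_measure_preimage_singleton (Set.to_countable E)
    fun g _ => hr (measurableSet_singleton g), ← tsum_pathWeight_eq_kernelPow_one,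
    tsum_subtype E fun g => μ (r ⁻¹' {g})]
  refine tsum_congr fun g => ?_
  have hfiber : r ⁻¹' {g} = {ω | ∀ u : Fin (t + 1), ω u = g u} := by
    ext ω
    simp [r, funext_iff]
  by_cases hg : g ∈ E
  · rw [Set.indicator_of_mem hg, hfiber, hμ.measure_cylinder, pathWeight, pathWeight]
    congr 2 with u
    simp [tabooKernel, hg u]
  · obtain ⟨u, hu⟩ : ∃ u : Fin t, g u.succ = j := by simpa [E] using hg
    rw [Set.indicator_of_notMem hg, pathWeight,
      prod_eq_zero (mem_univ u) (by simp [tabooKernel, hu]), mul_zero]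

lemma IsMarkovChain.tsum_kernelPow_le_expHit (hμ : IsMarkovChain p s μ) (j : S) :
    ∑' t, kernelPow (tabooKernel p j) t 1 s ≤ expHit μ j := by
  have hmeas : ∀ t, MeasurableSet {ω : ℕ → S | ∀ u < t, ω (u + 1) ≠ j} := fun t => by
    measurability
  calc ∑' t, kernelPow (tabooKernel p j) t 1 s
      = ∑' t, ∫⁻ ω, {ω : ℕ → S | ∀ u < t, ω (u + 1) ≠ j}.indicator 1 ω ∂μ := by
        simp only [lintegral_indicator_one (hmeas _), hμ.measure_forall_ne]
    _ = ∫⁻ ω, ∑' t, {ω : ℕ → S | ∀ u < t, ω (u + 1) ≠ j}.indicator 1 ω ∂μ :=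
        (lintegral_tsum fun t => (measurable_const.indicator (hmeas t)).aemeasurable).symm
    _ ≤ expHit μ j := lintegral_mono (tsum_indicator_le_hitTime j)

theorem IsMarkovChain.le_expHit (hμ : IsMarkovChain p s μ) {j : S} {φ : S → ℝ≥0∞} {K : ℝ≥0∞}
    (hK : K ≠ ∞) (hφK : ∀ x, φ x ≤ K) (hφj : φ j = 0)
    (hφ : ∀ x, x ≠ j → φ x ≤ 1 + ∑' y, p x y * φ y) : φ s ≤ expHit μ j := by
  refine (le_tsum_kernelPow_one hK hφK (fun x => ?_) s).trans (hμ.tsum_kernelPow_le_expHit j)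
  by_cases hx : x = j
  · simp [hx, hφj]
  refine (hφ x hx).trans_eq (congrArg _ (tsum_congr fun y => ?_))
  by_cases hy : y = j <;> simp [tabooKernel, hy, hφj]

theorem IsMarkovChain.le_expHit_of_closed (hμ : IsMarkovChain p s μ) {C : Set S}
    (hC : ∀ x ∈ C, ∀ y, p x y ≠ 0 → y ∈ C) (hs : s ∈ C) {j : S} {φ : S → ℝ≥0∞} {K : ℝ≥0∞}
    (hK : K ≠ ∞) (hφK : ∀ x ∈ C, φ x ≤ K) (hφj : φ j = 0)
    (hφ : ∀ x ∈ C, x ≠ j → φ x ≤ 1 + ∑' y, p x y * φ y) : φ s ≤ expHit μ j := by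
  rw [← Set.indicator_of_mem hs φ]
  refine hμ.le_expHit hK (fun x => ?_) (Set.indicator_apply_eq_zero.2 fun _ => hφj)
    (fun x hxj => ?_)
  · by_cases hx : x ∈ C
    · simpa [hx] using hφK x hx
    · simp [hx]
  · by_cases hx : x ∈ C
    · rw [Set.indicator_of_mem hx]
      refine (hφ x hx hxj).trans_eq (congrArg _ (tsum_congr fun y => ?_))
      by_cases hy : p x y = 0
      · simp [hy]
      · rw [Set.indicator_of_mem (hC x hx y hy)]
    · simp [hx]

theorem IsMarkovChain.expHit_eq_top_of_closed (hμ : IsMarkovChain p s μ) {C : Set S}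
    (hC : ∀ x ∈ C, ∀ y, p x y ≠ 0 → y ∈ C) (hs : s ∈ C) (hsum : ∀ x ∈ C, ∑' y, p x y = 1)
    {j : S} (hj : j ∉ C) : expHit μ j = ∞ := by
  refine ENNReal.eq_top_of_forall_nnreal_le fun M => ?_
  have hsj : s ≠ j := fun h => hj (h ▸ hs)
  have hφ : ∀ x ∈ C, x ≠ j →
      (if x = j then 0 else (M : ℝ≥0∞)) ≤ 1 + ∑' y, p x y * if y = j then 0 else (M : ℝ≥0∞) := by
    intro x hx hxj
    calc (if x = j then 0 else (M : ℝ≥0∞)) = ∑' y, M * p x y := by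
          simp [hxj, ENNReal.tsum_mul_left, hsum x hx]
      _ ≤ 1 + ∑' y, p x y * if y = j then 0 else (M : ℝ≥0∞) := by
        refine le_add_left (ENNReal.tsum_le_tsum fun y => ?_)
        by_cases hy : p x y = 0
        · simp [hy]
        · have hyj : y ≠ j := fun h => hj (h ▸ hC x hx y hy)
          simp [hyj, mul_comm]
  simpa [hsj] using hμ.le_expHit_of_closed (K := M) hC hs coe_ne_top
    (fun x _ => by split <;> simp) (by simp) hφ

end Chain

section NearestNeighbour

variable {π : ℤ → ℝ≥0∞} {a b : ℤ}

lemma nnTrans_closed_Icc {c d : ℤ} (hcd : c < d) (hc : c = a ∨ a < c ∧ π c = 1)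
    (hd : d = b ∨ d < b ∧ π d = 0) :
    ∀ x ∈ Set.Icc c d, ∀ y, nnTrans a b π x y ≠ 0 → y ∈ Set.Icc c d := by
  rintro x ⟨hcx, hxd⟩ y h
  unfold nnTrans at h
  rcases hc with rfl | ⟨hac, hc1⟩ <;> rcases hd with rfl | ⟨hdb, hd0⟩ <;>
    rcases hcx.lt_or_eq with hcx | rfl <;> rcases hxd.lt_or_eq with hxd | rfl <;>
    split_ifs at h <;> simp_all <;> omega

lemma tsum_nnTrans_left_mul (F : ℤ → ℝ≥0∞) :
    ∑' y, nnTrans a b π a y * F y = F (a + 1) := by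
  rw [tsum_eq_single (a + 1) fun y hy => by simp [nnTrans, hy]]
  simp [nnTrans]

lemma tsum_nnTrans_right_mul (hab : a < b) (F : ℤ → ℝ≥0∞) :
    ∑' y, nnTrans a b π b y * F y = F (b - 1) := by
  rw [tsum_eq_single (b - 1) fun y hy => by simp [nnTrans, hab.ne', hy]]
  simp [nnTrans, hab.ne']

lemma tsum_nnTrans_mul {x : ℤ} (hax : a < x) (hxb : x < b) (F : ℤ → ℝ≥0∞) :
    ∑' y, nnTrans a b π x y * F y = π x * F (x + 1) + (1 - π x) * F (x - 1) := by
  rw [tsum_eq_sum (s := {x + 1, x - 1}) fun y hy => by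
    simp_all [nnTrans, hax.ne', hxb.ne], sum_pair (by omega)]
  simp [nnTrans, hax, hxb, hax.ne', hxb.ne, show x - 1 ≠ x + 1 by omega]

lemma tsum_nnTrans (hab : a < b) (hπ : ∀ x, a < x → x < b → π x ≤ 1) {x : ℤ}
    (hx : x ∈ Set.Icc a b) : ∑' y, nnTrans a b π x y = 1 := by
  rw [← tsum_congr fun y => mul_one (nnTrans a b π x y)]
  rcases hx.1.lt_or_eq with hax | rfl
  · rcases hx.2.lt_or_eq with hxb | rfl
    · rw [tsum_nnTrans_mul hax hxb, mul_one, mul_one, add_tsub_cancel_of_le (hπ x hax hxb)]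
    · exact tsum_nnTrans_right_mul hab 1
  · exact tsum_nnTrans_left_mul 1

lemma tsum_nnTrans_mul_ofReal {x : ℤ} (hax : a < x) (hxb : x < b) (hπx : π x ≤ 1) {F : ℤ → ℝ}
    (hF₁ : 0 ≤ F (x + 1)) (hF₂ : 0 ≤ F (x - 1)) :
    ∑' y, nnTrans a b π x y * ENNReal.ofReal (F y) =
      ENNReal.ofReal ((π x).toReal * F (x + 1) + (1 - (π x).toReal) * F (x - 1)) := by
  have hπx' : π x ≠ ∞ := ne_top_of_le_ne_top one_ne_top hπx
  have hp : 0 ≤ (π x).toReal := toReal_nonneg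
  have hq : 0 ≤ 1 - (π x).toReal := sub_nonneg.2 (toReal_le_of_le_ofReal zero_le_one (by simpa))
  rw [tsum_nnTrans_mul hax hxb, ENNReal.ofReal_add (mul_nonneg hp hF₁) (mul_nonneg hq hF₂),
    ENNReal.ofReal_mul hp, ENNReal.ofReal_mul hq, ENNReal.ofReal_sub _ hp, ofReal_toReal hπx',
    ENNReal.ofReal_one]

end NearestNeighbour

section BirthDeath

variable {p : ℤ → ℝ} {n : ℤ}

-- The conductance of the edge `{x, x + 1}`.
def edgeWeight (p : ℤ → ℝ) (x : ℤ) : ℝ := ∏ i ∈ Ioc 1 x, p i / (1 - p i)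

-- For `0 < p < 1` on `(1, n)`, these are `E_x[T_{x+1}]`, `E_{x+1}[T_x]`, `E_x[T_n]` and
-- `E_x[T_1]` for the reflecting chain on `{1, …, n}`.
def upStepTime (p : ℤ → ℝ) (x : ℤ) : ℝ :=
  1 + 2 * (∑ k ∈ Ico 1 x, edgeWeight p k) / edgeWeight p x

def downStepTime (p : ℤ → ℝ) (n x : ℤ) : ℝ :=
  1 + 2 * (∑ k ∈ Ico (x + 1) n, edgeWeight p k) / edgeWeight p x

def timeToTop (p : ℤ → ℝ) (n x : ℤ) : ℝ := ∑ i ∈ Ico x n, upStepTime p i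

def timeToBottom (p : ℤ → ℝ) (n x : ℤ) : ℝ := ∑ i ∈ Ico 1 x, downStepTime p n i

lemma edgeWeight_pos (hp : ∀ x, 1 < x → x < n → 0 < p x ∧ p x < 1) {x : ℤ} (hx : x < n) :
    0 < edgeWeight p x :=
  prod_pos fun i hi => by
    obtain ⟨h1, h2⟩ := hp i (mem_Ioc.1 hi).1 (by linarith [(mem_Ioc.1 hi).2])
    exact div_pos h1 (sub_pos.2 h2)

lemma edgeWeight_add_one_mul {x : ℤ} (hx : 1 ≤ x) (hpx : p (x + 1) ≠ 1) :
    edgeWeight p (x + 1) * (1 - p (x + 1)) = edgeWeight p x * p (x + 1) := by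
  have hq : 1 - p (x + 1) ≠ 0 := sub_ne_zero.2 hpx.symm
  rw [edgeWeight, ← insert_Ioc_right_eq_Ioc_add_one hx, prod_insert (by simp), edgeWeight]
  field_simp

lemma upStepTime_one : upStepTime p 1 = 1 := by simp [upStepTime]

lemma downStepTime_sub_one : downStepTime p n (n - 1) = 1 := by simp [downStepTime]

lemma mul_upStepTime_add_one (hp : ∀ x, 1 < x → x < n → 0 < p x ∧ p x < 1) {x : ℤ} (hx : 1 ≤ x)
    (hxn : x + 1 < n) :
    p (x + 1) * upStepTime p (x + 1) = 1 + (1 - p (x + 1)) * upStepTime p x := by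
  have hw := edgeWeight_pos hp (x := x) (by omega)
  have hw' := edgeWeight_pos hp hxn
  have hdb := edgeWeight_add_one_mul hx (hp _ (by omega) hxn).2.ne
  rw [upStepTime, upStepTime, ← insert_Ico_right_eq_Ico_add_one hx, sum_insert (by simp)]
  field_simp
  linear_combination -2 * (∑ k ∈ Ico 1 x, edgeWeight p k + edgeWeight p x) * hdb

lemma one_sub_mul_downStepTime (hp : ∀ x, 1 < x → x < n → 0 < p x ∧ p x < 1) {x : ℤ}
    (hx : 1 ≤ x) (hxn : x + 1 < n) :
    (1 - p (x + 1)) * downStepTime p n x = 1 + p (x + 1) * downStepTime p n (x + 1) := by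
  have hw := edgeWeight_pos hp (x := x) (by omega)
  have hw' := edgeWeight_pos hp hxn
  have hdb := edgeWeight_add_one_mul hx (hp _ (by omega) hxn).2.ne
  rw [downStepTime, downStepTime, ← insert_Ico_add_one_left_eq_Ico hxn, sum_insert (by simp)]
  field_simp
  linear_combination 2 * (∑ k ∈ Ico (x + 1 + 1) n, edgeWeight p k + edgeWeight p (x + 1)) * hdb

lemma upStepTime_add_downStepTime (hp : ∀ x, 1 < x → x < n → 0 < p x ∧ p x < 1) {x : ℤ}
    (hx : 1 ≤ x) (hxn : x < n) :
    upStepTime p x + downStepTime p n x = 2 * (∑ k ∈ Ico 1 n, edgeWeight p k) / edgeWeight p x := by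
  have hw := edgeWeight_pos hp hxn
  rw [upStepTime, downStepTime, ← Ico_union_Ico_eq_Ico (by omega : 1 ≤ x + 1) hxn,
    sum_union (Ico_disjoint_Ico_consecutive _ _ _), ← insert_Ico_right_eq_Ico_add_one hx,
    sum_insert (by simp)]
  field_simp
  ring

lemma upStepTime_nonneg (hp : ∀ x, 1 < x → x < n → 0 < p x ∧ p x < 1) {x : ℤ} (hxn : x < n) :
    0 ≤ upStepTime p x := by
  have hw := edgeWeight_pos hp hxn
  have hS : 0 ≤ ∑ k ∈ Ico 1 x, edgeWeight p k :=
    sum_nonneg fun k hk => (edgeWeight_pos hp (by linarith [(mem_Ico.1 hk).2])).le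
  unfold upStepTime
  positivity

lemma downStepTime_nonneg (hp : ∀ x, 1 < x → x < n → 0 < p x ∧ p x < 1) {x : ℤ} (hxn : x < n) :
    0 ≤ downStepTime p n x := by
  have hw := edgeWeight_pos hp hxn
  have hS : 0 ≤ ∑ k ∈ Ico (x + 1) n, edgeWeight p k :=
    sum_nonneg fun k hk => (edgeWeight_pos hp (mem_Ico.1 hk).2).le
  unfold downStepTime
  positivity

lemma timeToTop_nonneg (hp : ∀ x, 1 < x → x < n → 0 < p x ∧ p x < 1) (x : ℤ) :
    0 ≤ timeToTop p n x :=
  sum_nonneg fun _ hi => upStepTime_nonneg hp (mem_Ico.1 hi).2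

lemma timeToBottom_nonneg (hp : ∀ x, 1 < x → x < n → 0 < p x ∧ p x < 1) {x : ℤ} (hxn : x ≤ n) :
    0 ≤ timeToBottom p n x :=
  sum_nonneg fun _ hi => downStepTime_nonneg hp (by linarith [(mem_Ico.1 hi).2])

lemma timeToTop_le_timeToTop_one (hp : ∀ x, 1 < x → x < n → 0 < p x ∧ p x < 1) {x : ℤ}
    (hx : 1 ≤ x) : timeToTop p n x ≤ timeToTop p n 1 :=
  sum_le_sum_of_subset_of_nonneg (Ico_subset_Ico hx le_rfl) fun _ hi _ =>
    upStepTime_nonneg hp (mem_Ico.1 hi).2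

lemma timeToBottom_le_timeToBottom_self (hp : ∀ x, 1 < x → x < n → 0 < p x ∧ p x < 1) {x : ℤ}
    (hxn : x ≤ n) : timeToBottom p n x ≤ timeToBottom p n n :=
  sum_le_sum_of_subset_of_nonneg (Ico_subset_Ico le_rfl hxn) fun _ hi _ =>
    downStepTime_nonneg hp (mem_Ico.1 hi).2

lemma timeToTop_self : timeToTop p n n = 0 := by simp [timeToTop]

lemma timeToBottom_one : timeToBottom p n 1 = 0 := by simp [timeToBottom]

lemma timeToTop_eq_add {x : ℤ} (hxn : x < n) :
    timeToTop p n x = upStepTime p x + timeToTop p n (x + 1) := by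
  rw [timeToTop, ← insert_Ico_add_one_left_eq_Ico hxn, sum_insert (by simp), timeToTop]

lemma timeToBottom_add_one {x : ℤ} (hx : 1 ≤ x) :
    timeToBottom p n (x + 1) = timeToBottom p n x + downStepTime p n x := by
  rw [timeToBottom, ← insert_Ico_right_eq_Ico_add_one hx, sum_insert (by simp), timeToBottom,
    add_comm]

lemma timeToTop_one (hn : 1 < n) : timeToTop p n 1 = 1 + timeToTop p n 2 := by
  rw [timeToTop_eq_add hn, upStepTime_one, one_add_one_eq_two]

lemma timeToBottom_self (hn : 1 < n) : timeToBottom p n n = 1 + timeToBottom p n (n - 1) := by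
  have h := timeToBottom_add_one (p := p) (n := n) (x := n - 1) (by omega)
  rwa [sub_add_cancel, downStepTime_sub_one, add_comm] at h

lemma timeToTop_eq (hp : ∀ x, 1 < x → x < n → 0 < p x ∧ p x < 1) {x : ℤ} (hx : 1 < x)
    (hxn : x < n) :
    timeToTop p n x = 1 + p x * timeToTop p n (x + 1) + (1 - p x) * timeToTop p n (x - 1) := by
  obtain ⟨y, rfl⟩ : ∃ y, x = y + 1 := ⟨x - 1, by ring⟩
  rw [add_sub_cancel_right, timeToTop_eq_add (x := y) (by omega), timeToTop_eq_add hxn]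
  linear_combination mul_upStepTime_add_one hp (by omega) hxn

lemma timeToBottom_eq (hp : ∀ x, 1 < x → x < n → 0 < p x ∧ p x < 1) {x : ℤ} (hx : 1 < x)
    (hxn : x < n) :
    timeToBottom p n x =
      1 + p x * timeToBottom p n (x + 1) + (1 - p x) * timeToBottom p n (x - 1) := by
  obtain ⟨y, rfl⟩ : ∃ y, x = y + 1 := ⟨x - 1, by ring⟩
  rw [add_sub_cancel_right, timeToBottom_add_one (x := y + 1) (by omega),
    timeToBottom_add_one (by omega)]
  linear_combination one_sub_mul_downStepTime hp (by omega) hxn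

lemma two_mul_sq_le_timeToTop_add_timeToBottom (hp : ∀ x, 1 < x → x < n → 0 < p x ∧ p x < 1)
    (hn : 1 < n) : 2 * ((n : ℝ) - 1) ^ 2 ≤ timeToTop p n 1 + timeToBottom p n n := by
  have hw : ∀ i ∈ Ico 1 n, 0 < edgeWeight p i := fun i hi => edgeWeight_pos hp (mem_Ico.1 hi).2
  have hW : 0 < ∑ i ∈ Ico 1 n, edgeWeight p i := sum_pos hw (nonempty_Ico.2 hn)
  have hsum : timeToTop p n 1 + timeToBottom p n n =
      2 * (∑ i ∈ Ico 1 n, edgeWeight p i) * ∑ i ∈ Ico 1 n, 1 / edgeWeight p i := by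
    rw [timeToTop, timeToBottom, ← sum_add_distrib, mul_sum]
    refine sum_congr rfl fun i hi => ?_
    rw [upStepTime_add_downStepTime hp (mem_Ico.1 hi).1 (mem_Ico.1 hi).2]
    ring
  have hcard : ((#(Ico 1 n) : ℕ) : ℝ) = n - 1 := by
    rw [Int.card_Ico, ← Int.cast_natCast, Int.toNat_of_nonneg (by omega)]
    push_cast
    ring
  have hcs := sq_sum_div_le_sum_sq_div (Ico 1 n) (fun _ => (1 : ℝ)) hw
  rw [sum_const, nsmul_one, hcard, div_le_iff₀ hW] at hcs
  simp only [one_pow] at hcs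
  rw [hsum]
  nlinarith

end BirthDeath

section ReflectingChain

variable {π : ℤ → ℝ≥0∞} {n : ℤ} {μ : Measure (ℕ → ℤ)}

lemma toReal_pos_and_lt_one (hπ : ∀ x, 1 < x → x < n → 0 < π x ∧ π x < 1) :
    ∀ x, 1 < x → x < n → 0 < (π x).toReal ∧ (π x).toReal < 1 := fun x h1 h2 =>
  ⟨toReal_pos (hπ x h1 h2).1.ne' (hπ x h1 h2).2.ne_top,
    toReal_lt_of_lt_ofReal (by simpa using (hπ x h1 h2).2)⟩

lemma ofReal_one_add_le (r : ℝ) : ENNReal.ofReal (1 + r) ≤ 1 + ENNReal.ofReal r :=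
  ofReal_add_le.trans_eq (by rw [ofReal_one])

theorem IsMarkovChain.ofReal_timeToTop_le_expHit (hμ : IsMarkovChain (nnTrans 1 n π) 1 μ)
    (hn : 1 < n) (hπ : ∀ x, 1 < x → x < n → 0 < π x ∧ π x < 1) :
    ENNReal.ofReal (timeToTop (fun x => (π x).toReal) n 1) ≤ expHit μ n := by
  have hp := toReal_pos_and_lt_one hπ
  refine hμ.le_expHit_of_closed (nnTrans_closed_Icc hn (Or.inl rfl) (Or.inl rfl))
    ⟨le_rfl, hn.le⟩ ofReal_ne_top
    (fun x hx => ofReal_le_ofReal (timeToTop_le_timeToTop_one hp hx.1)) (by simp [timeToTop_self])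
    fun x ⟨h1, hxn⟩ hxn' => ?_
  rcases h1.lt_or_eq with h1 | rfl
  · have hxn : x < n := lt_of_le_of_ne hxn hxn'
    rw [tsum_nnTrans_mul_ofReal h1 hxn (hπ x h1 hxn).2.le (timeToTop_nonneg hp _)
      (timeToTop_nonneg hp _), timeToTop_eq hp h1 hxn, add_assoc]
    exact ofReal_one_add_le _
  · rw [tsum_nnTrans_left_mul, timeToTop_one hn, one_add_one_eq_two]
    exact ofReal_one_add_le _

theorem IsMarkovChain.ofReal_timeToBottom_le_expHit (hμ : IsMarkovChain (nnTrans 1 n π) n μ)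
    (hn : 1 < n) (hπ : ∀ x, 1 < x → x < n → 0 < π x ∧ π x < 1) :
    ENNReal.ofReal (timeToBottom (fun x => (π x).toReal) n n) ≤ expHit μ 1 := by
  have hp := toReal_pos_and_lt_one hπ
  refine hμ.le_expHit_of_closed (nnTrans_closed_Icc hn (Or.inl rfl) (Or.inl rfl))
    ⟨hn.le, le_rfl⟩ ofReal_ne_top
    (fun x hx => ofReal_le_ofReal (timeToBottom_le_timeToBottom_self hp hx.2))
    (by simp [timeToBottom_one]) fun x ⟨hx1, hxn⟩ hx1' => ?_
  rcases hxn.lt_or_eq with hxn | rfl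
  · have h1 : 1 < x := lt_of_le_of_ne hx1 (Ne.symm hx1')
    rw [tsum_nnTrans_mul_ofReal h1 hxn (hπ x h1 hxn).2.le (timeToBottom_nonneg hp (by omega))
      (timeToBottom_nonneg hp (by omega)), timeToBottom_eq hp h1 hxn, add_assoc]
    exact ofReal_one_add_le _
  · rw [tsum_nnTrans_right_mul hn, timeToBottom_self hn]
    exact ofReal_one_add_le _

theorem IsMarkovChain.expHit_eq_top_of_eq_zero (hμ : IsMarkovChain (nnTrans 1 n π) 1 μ)
    (hπ : ∀ x, 1 < x → x < n → π x ≤ 1) {i : ℤ} (hi : 1 < i) (hin : i < n) (hi0 : π i = 0) :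
    expHit μ n = ∞ :=
  hμ.expHit_eq_top_of_closed (nnTrans_closed_Icc hi (Or.inl rfl) (Or.inr ⟨hin, hi0⟩))
    ⟨le_rfl, hi.le⟩ (fun _ hx => tsum_nnTrans (hi.trans hin) hπ ⟨hx.1, hx.2.trans hin.le⟩)
    fun h => hin.not_ge h.2

theorem IsMarkovChain.expHit_eq_top_of_eq_one (hμ : IsMarkovChain (nnTrans 1 n π) n μ)
    (hπ : ∀ x, 1 < x → x < n → π x ≤ 1) {i : ℤ} (hi : 1 < i) (hin : i < n) (hi1 : π i = 1) :
    expHit μ 1 = ∞ :=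
  hμ.expHit_eq_top_of_closed (nnTrans_closed_Icc hin (Or.inr ⟨hi, hi1⟩) (Or.inl rfl))
    ⟨hin.le, le_rfl⟩ (fun _ hx => tsum_nnTrans (hi.trans hin) hπ ⟨hi.le.trans hx.1, hx.2⟩)
    fun h => hi.not_ge h.1

theorem ofReal_two_mul_sq_le_expHit_add_expHit {μ₁ μₙ : Measure (ℕ → ℤ)}
    (h₁ : IsMarkovChain (nnTrans 1 n π) 1 μ₁) (hₙ : IsMarkovChain (nnTrans 1 n π) n μₙ)
    (hn : 1 < n) (hπ : ∀ x, 1 < x → x < n → 0 < π x ∧ π x < 1) :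
    ENNReal.ofReal (2 * ((n : ℝ) - 1) ^ 2) ≤ expHit μ₁ n + expHit μₙ 1 := by
  have hp := toReal_pos_and_lt_one hπ
  calc ENNReal.ofReal (2 * ((n : ℝ) - 1) ^ 2)
      ≤ ENNReal.ofReal (timeToTop (fun x => (π x).toReal) n 1 +
          timeToBottom (fun x => (π x).toReal) n n) :=
        ofReal_le_ofReal (two_mul_sq_le_timeToTop_add_timeToBottom hp hn)
    _ = ENNReal.ofReal (timeToTop (fun x => (π x).toReal) n 1) +
          ENNReal.ofReal (timeToBottom (fun x => (π x).toReal) n n) :=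
        ofReal_add (timeToTop_nonneg hp _) (timeToBottom_nonneg hp le_rfl)
    _ ≤ expHit μ₁ n + expHit μₙ 1 :=
        add_le_add (h₁.ofReal_timeToTop_le_expHit hn hπ) (hₙ.ofReal_timeToBottom_le_expHit hn hπ)

end ReflectingChain

theorem statement0 (n : ℕ) (hn : 1 < n) (π : ℤ → ℝ≥0∞)
    (hπ : ∀ i : ℤ, 2 ≤ i → i ≤ (n : ℤ) - 1 → π i ≤ 1)
    (μ₁ μₙ : MeasureTheory.Measure (ℕ → ℤ))
    (h₁ : IsMarkovChain (nnTrans 1 n π) 1 μ₁)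
    (hₙ : IsMarkovChain (nnTrans 1 n π) n μₙ) :
    2 * ((n : ℝ≥0∞) - 1) ^ 2 ≤ expHit μ₁ (n : ℤ) + expHit μₙ 1 := by
  have hn' : (1 : ℤ) < n := by exact_mod_cast hn
  have hπ' : ∀ x : ℤ, 1 < x → x < n → π x ≤ 1 := fun x h1 h2 => hπ x h1 (by omega)
  by_cases h0 : ∃ i : ℤ, 1 < i ∧ i < n ∧ π i = 0
  · obtain ⟨i, hi, hin, hi0⟩ := h0
    simp [h₁.expHit_eq_top_of_eq_zero hπ' hi hin hi0]
  by_cases h1 : ∃ i : ℤ, 1 < i ∧ i < n ∧ π i = 1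
  · obtain ⟨i, hi, hin, hi1⟩ := h1
    simp [hₙ.expHit_eq_top_of_eq_one hπ' hi hin hi1]
  push Not at h0 h1
  have hcast : ENNReal.ofReal (2 * (((n : ℤ) : ℝ) - 1) ^ 2) = 2 * ((n : ℝ≥0∞) - 1) ^ 2 := by
    have : (1 : ℝ) ≤ n := by exact_mod_cast hn.le
    rw [ofReal_mul zero_le_two, ofReal_pow (by simpa using this), ofReal_sub _ zero_le_one]
    simp
  rw [← hcast]
  exact ofReal_two_mul_sq_le_expHit_add_expHit h₁ hₙ hn' fun x hx hxn =>
    ⟨pos_iff_ne_zero.2 (h0 x hx hxn), lt_of_le_of_ne (hπ' x hx hxn) (h1 x hx hxn)⟩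

end
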